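/- arXiv:1912.12625 — 2 statements merged into one kernel-verified Lean document; each statement's English description precedes it below -/
import Mathlib

section
/- Let λ > 0, c > 0, t > 0, and define F(u,t) = ∑_{k=0}^∞ (λ/(2c))^{2k} (c²t² − u²)^k / (k!)². Then ∫₀^{ct} (∂³F/∂t³)(u,t) du = (cλ²/2)(e^{λt} + e^{−λt}) − λ²c − λ⁴ c t²/8. -/
/-!
Writing `r = (λ/(2c))²`, we have `F(u, s) = G(c²s² - u²)` for the entire power series
`G(x) = ∑ rᵏ xᵏ / (k!)²`. The chain rule through the quadratic gives
`∂³F/∂t³ = (2c²t)³ G'''(c²t² - u²) + 12c⁴t G''(c²t² - u²)`, and the series for `G''` and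
`G'''` may be integrated termwise, using `∫₀^A (A² - u²)ᵏ du = A^(2k+1) 4ᵏ (k!)² / (2k+1)!`.
The `k`-th term of the `G'''` series and the `(k+1)`-st term of the `G''` series add up to
`cλ² (λt)^(2k+4) / (2k+4)!`, so the whole sum is `cλ² (cosh λt - 1 - (λt)²/2)` plus the
`0`-th term `3cλ⁴t²/8` of the `G''` series.
-/

/-- `F(u,t) = ∑_{k=0}^∞ (λ/(2c))^{2k} (c²t² − u²)^k / (k!)²`,
which equals `I₀((λ/c)√(c²t² − u²))` for `|u| ≤ ct`. -/
noncomputable def F (lam c u t : ℝ) : ℝ :=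
  ∑' k : ℕ, (lam / (2 * c)) ^ (2 * k) * (c ^ 2 * t ^ 2 - u ^ 2) ^ k /
    ((Nat.factorial k : ℝ)) ^ 2

namespace EntireSeries

open FormalMultilinearSeries

def IsEntire (a : ℕ → ℝ) : Prop := ∀ R, Summable fun k => |a k| * R ^ k

def derivCoeff (a : ℕ → ℝ) (k : ℕ) : ℝ := (k + 1) * a (k + 1)

variable {a : ℕ → ℝ}

lemma IsEntire.derivCoeff (ha : IsEntire a) : IsEntire (derivCoeff a) := by
  intro R
  set S := 2 * (|R| + 1)
  refine .of_norm_bounded ((summable_nat_add_iff 1).2 (ha S)) fun k => ?_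
  have hk : ((k : ℝ) + 1) ≤ 2 ^ (k + 1) := by
    exact_mod_cast (Nat.lt_two_pow_self (n := k + 1)).le
  have hR : |R| ^ k ≤ (|R| + 1) ^ (k + 1) :=
    (pow_le_pow_left₀ (abs_nonneg R) (by linarith) k).trans
      (pow_le_pow_right₀ (by linarith [abs_nonneg R]) k.le_succ)
  calc ‖|EntireSeries.derivCoeff a k| * R ^ k‖ = |a (k + 1)| * (((k : ℝ) + 1) * |R| ^ k) := by
        simp only [EntireSeries.derivCoeff, norm_mul, norm_pow, Real.norm_eq_abs, abs_abs,
          abs_mul]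
        rw [abs_of_nonneg (by positivity : (0 : ℝ) ≤ k + 1)]
        ring
    _ ≤ |a (k + 1)| * (2 ^ (k + 1) * (|R| + 1) ^ (k + 1)) := by gcongr
    _ = |a (k + 1)| * S ^ (k + 1) := by rw [mul_pow]

lemma IsEntire.iterate_derivCoeff (ha : IsEntire a) (n : ℕ) :
    IsEntire (EntireSeries.derivCoeff^[n] a) := by
  induction n with
  | zero => exact ha
  | succ n ih =>
    rw [Function.iterate_succ_apply']
    exact ih.derivCoeff

lemma IsEntire.summable_mul_pow (ha : IsEntire a) (x : ℝ) : Summable fun k => a k * x ^ k :=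
  .of_norm_bounded (ha |x|) fun k => by simp

lemma ofScalarsSum_eq_tsum_mul_pow (x : ℝ) : ofScalarsSum a x = ∑' k, a k * x ^ k :=
  ofScalars_sum_eq a x

lemma hasDerivAt_ofScalarsSum (ha : IsEntire a) (x : ℝ) :
    HasDerivAt (ofScalarsSum a) (ofScalarsSum (derivCoeff a) x) x := by
  have hsplit : ofScalarsSum a = fun y => a 0 + ∑' k, a (k + 1) * y ^ (k + 1) := by
    ext y
    rw [ofScalarsSum_eq_tsum_mul_pow, tsum_eq_zero_add'
      ((summable_nat_add_iff 1).2 (ha.summable_mul_pow y)), pow_zero, mul_one]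
  set R := |x| + 1
  rw [hsplit, ofScalarsSum_eq_tsum_mul_pow]
  refine .const_add _ (hasDerivAt_tsum_of_isPreconnected (g := fun k y => a (k + 1) * y ^ (k + 1))
    (g' := fun k y => derivCoeff a k * y ^ k) (ha.derivCoeff R) Metric.isOpen_ball
    (convex_ball (0 : ℝ) R).isPreconnected (fun k y _ => ?_) (fun k y hy => ?_)
    (Metric.mem_ball_self (by positivity)) ?_ ?_)
  · refine ((hasDerivAt_pow (k + 1) y).const_mul (a (k + 1))).congr_deriv ?_
    rw [derivCoeff, Nat.add_sub_cancel]
    push_cast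
    ring
  · rw [mem_ball_zero_iff, Real.norm_eq_abs] at hy
    rw [norm_mul, norm_pow, Real.norm_eq_abs, Real.norm_eq_abs]
    gcongr
  · simp
  · rw [mem_ball_zero_iff, Real.norm_eq_abs]
    linarith

lemma hasDerivAt_ofScalarsSum_iterate (ha : IsEntire a) (n : ℕ) (x : ℝ) :
    HasDerivAt (ofScalarsSum (derivCoeff^[n] a)) (ofScalarsSum (derivCoeff^[n + 1] a) x) x := by
  rw [Function.iterate_succ_apply']
  exact hasDerivAt_ofScalarsSum (ha.iterate_derivCoeff n) x

lemma continuous_ofScalarsSum (ha : IsEntire a) : Continuous (ofScalarsSum (E := ℝ) a) :=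
  continuous_iff_continuousAt.2 fun x => (hasDerivAt_ofScalarsSum ha x).continuousAt

lemma hasSum_intervalIntegral_ofScalarsSum_comp (ha : IsEntire a) {φ : ℝ → ℝ}
    (hφ : Continuous φ) (x y : ℝ) :
    HasSum (fun k => a k * ∫ u in x..y, φ u ^ k) (∫ u in x..y, ofScalarsSum a (φ u)) := by
  obtain ⟨C, hC⟩ :=
    (isCompact_uIcc (a := x) (b := y)).exists_bound_of_continuousOn hφ.continuousOn
  simp_rw [← intervalIntegral.integral_const_mul]
  refine intervalIntegral.hasSum_integral_of_dominated_convergence (fun k _ => |a k| * C ^ k)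
    (fun k => by fun_prop) (fun k => .of_forall fun u hu => ?_) (.of_forall fun _ _ => ha C)
    intervalIntegrable_const (.of_forall fun u _ => ?_)
  · rw [norm_mul, norm_pow, Real.norm_eq_abs]
    gcongr
    exact hC u (Set.uIoc_subset_uIcc hu)
  · rw [ofScalarsSum_eq_tsum_mul_pow]
    exact (ha.summable_mul_pow _).hasSum

end EntireSeries

open EntireSeries FormalMultilinearSeries MeasureTheory
open scoped Nat

lemma iteratedDeriv_three_comp_quadratic {G G₁ G₂ G₃ : ℝ → ℝ}
    (h₀ : ∀ x, HasDerivAt G (G₁ x) x) (h₁ : ∀ x, HasDerivAt G₁ (G₂ x) x)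
    (h₂ : ∀ x, HasDerivAt G₂ (G₃ x) x) (α β s : ℝ) :
    iteratedDeriv 3 (fun s => G (α * s ^ 2 - β)) s =
      (2 * α * s) ^ 3 * G₃ (α * s ^ 2 - β) + 12 * α ^ 2 * s * G₂ (α * s ^ 2 - β) := by
  have hq (s : ℝ) : HasDerivAt (fun s => α * s ^ 2 - β) (2 * α * s) s := by
    simpa [mul_comm, mul_left_comm, mul_assoc] using
      ((hasDerivAt_pow 2 s).const_mul α).sub_const β
  have hlin (s : ℝ) : HasDerivAt (fun s => 2 * α * s) (2 * α) s := by
    simpa using (hasDerivAt_id s).const_mul (2 * α)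
  have d₁ : deriv (fun s => G (α * s ^ 2 - β)) =
      fun s => G₁ (α * s ^ 2 - β) * (2 * α * s) :=
    funext fun s => ((h₀ _).comp s (hq s)).deriv
  have d₂ : deriv (fun s => G₁ (α * s ^ 2 - β) * (2 * α * s)) = fun s =>
      G₂ (α * s ^ 2 - β) * (2 * α * s) ^ 2 + G₁ (α * s ^ 2 - β) * (2 * α) :=
    funext fun s => (((h₁ _).comp s (hq s)).mul (hlin s)).deriv.trans
      (by simp only [Function.comp_apply]; ring)
  have d₃ : deriv (fun s =>
      G₂ (α * s ^ 2 - β) * (2 * α * s) ^ 2 + G₁ (α * s ^ 2 - β) * (2 * α)) s =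
      (2 * α * s) ^ 3 * G₃ (α * s ^ 2 - β) + 12 * α ^ 2 * s * G₂ (α * s ^ 2 - β) :=
    ((((h₂ _).comp s (hq s)).mul ((hlin s).pow 2)).add
      (((h₁ _).comp s (hq s)).mul_const (2 * α))).deriv.trans
      (by simp only [Function.comp_apply, Pi.pow_apply]; ring)
  rw [iteratedDeriv_eq_iterate]
  change deriv (deriv (deriv fun s => G (α * s ^ 2 - β))) s = _
  rw [d₁, d₂, d₃]

lemma integral_sq_sub_sq_pow_succ (A : ℝ) (m : ℕ) :
    (2 * m + 3) * ∫ u in (0 : ℝ)..A, (A ^ 2 - u ^ 2) ^ (m + 1) =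
      (2 * m + 2) * A ^ 2 * ∫ u in (0 : ℝ)..A, (A ^ 2 - u ^ 2) ^ m := by
  have hderiv (u : ℝ) : HasDerivAt (fun u => u * (A ^ 2 - u ^ 2) ^ (m + 1))
      ((2 * m + 3) * (A ^ 2 - u ^ 2) ^ (m + 1) - (2 * m + 2) * A ^ 2 * (A ^ 2 - u ^ 2) ^ m) u := by
    have hsq : HasDerivAt (fun u => A ^ 2 - u ^ 2) (-(2 * u)) u := by
      simpa using (hasDerivAt_pow 2 u).const_sub (A ^ 2)
    refine ((hasDerivAt_id u).mul (hsq.pow (m + 1))).congr_deriv ?_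
    simp only [Pi.pow_apply, id_eq, Nat.add_sub_cancel]
    push_cast
    ring
  have hFTC := intervalIntegral.integral_eq_sub_of_hasDerivAt (a := 0) (b := A)
    (fun u _ => hderiv u) (by apply Continuous.intervalIntegrable; fun_prop)
  rw [intervalIntegral.integral_sub (by apply Continuous.intervalIntegrable; fun_prop)
    (by apply Continuous.intervalIntegrable; fun_prop), intervalIntegral.integral_const_mul,
    intervalIntegral.integral_const_mul] at hFTC
  simp only [sub_self, ne_eq, Nat.add_one_ne_zero, not_false_eq_true, zero_pow, mul_zero,
    zero_mul, sub_zero] at hFTC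
  linarith

lemma integral_sq_sub_sq_pow (A : ℝ) (m : ℕ) :
    ∫ u in (0 : ℝ)..A, (A ^ 2 - u ^ 2) ^ m =
      A ^ (2 * m + 1) * 4 ^ m * (m ! : ℝ) ^ 2 / (2 * m + 1)! := by
  induction m with
  | zero => simp
  | succ m ih =>
    have hfac : ((2 * (m + 1) + 1)! : ℝ) = (2 * m + 3) * (2 * m + 2) * (2 * m + 1)! := by
      rw [show 2 * (m + 1) + 1 = 2 * m + 1 + 1 + 1 by ring, Nat.factorial_succ,
        Nat.factorial_succ]
      push_cast
      ring
    refine (mul_right_inj' (by positivity : (2 * m + 3 : ℝ) ≠ 0)).1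
      ((integral_sq_sub_sq_pow_succ A m).trans ?_)
    rw [ih, hfac, Nat.factorial_succ m]
    push_cast
    field_simp
    ring

-- `∑ₖ besselI0Coeff r k * xᵏ = I₀(2√(r x))`
noncomputable def besselI0Coeff (r : ℝ) (k : ℕ) : ℝ := r ^ k / (k ! : ℝ) ^ 2

lemma summable_abs_besselI0Coeff_mul_pow (r R : ℝ) :
    Summable fun k => |besselI0Coeff r k| * R ^ k := by
  refine .of_norm_bounded (Real.summable_pow_div_factorial (|r| * |R|)) fun k => ?_
  have hk : (1 : ℝ) ≤ k ! := by exact_mod_cast k.factorial_pos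
  rw [besselI0Coeff, norm_mul, norm_pow, Real.norm_eq_abs, abs_abs, abs_div, abs_pow, abs_pow,
    Nat.abs_cast, mul_pow, div_mul_eq_mul_div, sq]
  exact div_le_div_of_nonneg_left (by positivity) (by positivity)
    (le_mul_of_one_le_left (by positivity) hk)

lemma iterate_derivCoeff_besselI0Coeff (r : ℝ) (n k : ℕ) :
    derivCoeff^[n] (besselI0Coeff r) k = r ^ (k + n) / ((k + n)! * k !) := by
  induction n generalizing k with
  | zero => simp [besselI0Coeff, sq]
  | succ n ih =>
    rw [Function.iterate_succ_apply', derivCoeff, ih, Nat.factorial_succ k,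
      show k + 1 + n = k + (n + 1) by ring]
    push_cast
    field_simp

lemma F_eq_ofScalarsSum (lam c u s : ℝ) :
    F lam c u s =
      ofScalarsSum (besselI0Coeff ((lam / (2 * c)) ^ 2)) (c ^ 2 * s ^ 2 - u ^ 2) := by
  rw [ofScalarsSum_eq_tsum_mul_pow, F]
  congr 1 with k
  rw [besselI0Coeff, pow_mul]
  ring

lemma third_deriv_integral_term_pair (lam c t : ℝ) (hc : c ≠ 0) (k : ℕ) :
    (2 * c ^ 2 * t) ^ 3 * (((lam / (2 * c)) ^ 2) ^ (k + 3) / ((k + 3)! * k !) *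
        ((c * t) ^ (2 * k + 1) * 4 ^ k * (k ! : ℝ) ^ 2 / (2 * k + 1)!)) +
      12 * (c ^ 2) ^ 2 * t * (((lam / (2 * c)) ^ 2) ^ (k + 1 + 2) / ((k + 1 + 2)! * (k + 1)!) *
        ((c * t) ^ (2 * (k + 1) + 1) * 4 ^ (k + 1) * ((k + 1)! : ℝ) ^ 2 / (2 * (k + 1) + 1)!)) =
    c * lam ^ 2 * ((lam * t) ^ (2 * (k + 2)) / (2 * (k + 2))!) := by
  have f₁ : ((k + 3)! : ℝ) = (k + 3) * (k + 2) * (k + 1) * k ! := by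
    rw [show k + 3 = k + 2 + 1 by ring, Nat.factorial_succ, Nat.factorial_succ, Nat.factorial_succ]
    push_cast; ring
  have f₂ : ((k + 1)! : ℝ) = (k + 1) * k ! := by rw [Nat.factorial_succ]; push_cast; ring
  have f₃ : ((2 * (k + 1) + 1)! : ℝ) = (2 * k + 3) * (2 * k + 2) * (2 * k + 1)! := by
    rw [show 2 * (k + 1) + 1 = 2 * k + 1 + 1 + 1 by ring, Nat.factorial_succ, Nat.factorial_succ]
    push_cast; ring
  have f₄ : ((2 * (k + 2))! : ℝ) = (2 * k + 4) * (2 * k + 3) * (2 * k + 2) * (2 * k + 1)! := by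
    rw [show 2 * (k + 2) = 2 * k + 1 + 1 + 1 + 1 by ring, Nat.factorial_succ, Nat.factorial_succ,
      Nat.factorial_succ]
    push_cast; ring
  have h₄ : (4 : ℝ) ^ k = 2 ^ k * 2 ^ k := by rw [← mul_pow]; norm_num
  rw [show k + 1 + 2 = k + 3 by ring, f₁, f₂, f₃, f₄, ← pow_mul, ← pow_mul, div_pow, mul_pow,
    pow_succ (4 : ℝ) k, h₄]
  field_simp
  ring

lemma third_deriv_integral_series_eq (lam c t : ℝ) (hc : c ≠ 0) {S₂ S₃ : ℝ}
    (h₂ : HasSum (fun k => derivCoeff^[2] (besselI0Coeff ((lam / (2 * c)) ^ 2)) k *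
      ∫ u in (0 : ℝ)..c * t, ((c * t) ^ 2 - u ^ 2) ^ k) S₂)
    (h₃ : HasSum (fun k => derivCoeff^[3] (besselI0Coeff ((lam / (2 * c)) ^ 2)) k *
      ∫ u in (0 : ℝ)..c * t, ((c * t) ^ 2 - u ^ 2) ^ k) S₃) :
    (2 * c ^ 2 * t) ^ 3 * S₃ + 12 * (c ^ 2) ^ 2 * t * S₂ =
      c * lam ^ 2 / 2 * (Real.exp (lam * t) + Real.exp (-(lam * t))) - lam ^ 2 * c -
        lam ^ 4 * c * t ^ 2 / 8 := by
  simp only [iterate_derivCoeff_besselI0Coeff, integral_sq_sub_sq_pow] at h₂ h₃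
  have hpair := (h₃.mul_left ((2 * c ^ 2 * t) ^ 3)).add
    (((hasSum_nat_add_iff' 1).2 h₂).mul_left (12 * (c ^ 2) ^ 2 * t))
  simp only [third_deriv_integral_term_pair lam c t hc] at hpair
  have hcosh := ((hasSum_nat_add_iff' 2).2 (Real.hasSum_cosh (lam * t))).mul_left (c * lam ^ 2)
  have h := hpair.unique hcosh
  simp only [Finset.sum_range_succ, Finset.sum_range_zero, Real.cosh_eq] at h
  norm_num at h
  field_simp at h ⊢
  linear_combination (1 / 2 : ℝ) * h

theorem integral_d3F_dt3_general
    (lam c t : ℝ) (hc : 0 < c) :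
    ∫ u in (0 : ℝ)..(c * t), iteratedDeriv 3 (fun s => F lam c u s) t =
      c * lam ^ 2 / 2 * (Real.exp (lam * t) + Real.exp (-(lam * t))) - lam ^ 2 * c -
        lam ^ 4 * c * t ^ 2 / 8 := by
  set a := besselI0Coeff ((lam / (2 * c)) ^ 2)
  have ha : IsEntire a := summable_abs_besselI0Coeff_mul_pow _
  have hderiv (u : ℝ) : iteratedDeriv 3 (fun s => F lam c u s) t =
      (2 * c ^ 2 * t) ^ 3 * ofScalarsSum (derivCoeff^[3] a) ((c * t) ^ 2 - u ^ 2) +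
        12 * (c ^ 2) ^ 2 * t * ofScalarsSum (derivCoeff^[2] a) ((c * t) ^ 2 - u ^ 2) := by
    simp only [F_eq_ofScalarsSum]
    rw [mul_pow c t]
    exact iteratedDeriv_three_comp_quadratic (hasDerivAt_ofScalarsSum_iterate ha 0)
      (hasDerivAt_ofScalarsSum_iterate ha 1) (hasDerivAt_ofScalarsSum_iterate ha 2) _ _ t
  have hφ : Continuous fun u : ℝ => (c * t) ^ 2 - u ^ 2 := by fun_prop
  have hint (n : ℕ) : IntervalIntegrable
      (fun u => ofScalarsSum (derivCoeff^[n] a) ((c * t) ^ 2 - u ^ 2)) volume 0 (c * t) :=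
    ((continuous_ofScalarsSum (ha.iterate_derivCoeff n)).comp hφ).intervalIntegrable _ _
  simp only [hderiv]
  rw [intervalIntegral.integral_add ((hint 3).const_mul _) ((hint 2).const_mul _),
    intervalIntegral.integral_const_mul, intervalIntegral.integral_const_mul]
  exact third_deriv_integral_series_eq lam c t hc.ne'
    (hasSum_intervalIntegral_ofScalarsSum_comp (ha.iterate_derivCoeff 2) hφ 0 (c * t))
    (hasSum_intervalIntegral_ofScalarsSum_comp (ha.iterate_derivCoeff 3) hφ 0 (c * t))

theorem integral_d3F_dt3
    (lam c t : ℝ) (hlam : 0 < lam) (hc : 0 < c) (ht : 0 < t) :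
    ∫ u in (0 : ℝ)..(c * t), iteratedDeriv 3 (fun s => F lam c u s) t =
      c * lam ^ 2 / 2 * (Real.exp (lam * t) + Real.exp (-(lam * t))) - lam ^ 2 * c -
        lam ^ 4 * c * t ^ 2 / 8 :=
  integral_d3F_dt3_general lam c t hc
end

section
/- Let λ > 0, c > 0, t > 0, 0 < u < ct, and define p(u,t) = (e^{−λt}/c) [ −λ F(u,t) + (∂F/∂t)(u,t) + (2/λ)(∂²F/∂t²)(u,t) ], where F(u,t) = ∑_{k=0}^∞ (λ/(2c))^{2k} (c²t² − u²)^k / (k!)². Then p(u,t) = e^{−λt} [ (λ/c) · ((c²t² + u²)/(c²t² − u²)) · I₀((λ/c)√(c²t² − u²)) + (1/√(c²t² − u²)) · ((λt(c²t² − u²) − 2(u² + c²t²))/(c²t² − u²)) · I₁((λ/c)√(c²t² − u²)) ]. -/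
/-- The density of the absolutely continuous component of the planar cyclic motion:
`p(u,t) = (e^{−λt}/c)[−λF + ∂F/∂t + (2/λ)∂²F/∂t²]`. -/
noncomputable def planarDensity (lam c u t : ℝ) : ℝ :=
  Real.exp (-(lam * t)) / c *
    (-(lam * F lam c u t) + deriv (fun s => F lam c u s) t +
      2 / lam * iteratedDeriv 2 (fun s => F lam c u s) t)

/-- The modified Bessel function of the first kind of order zero. -/
noncomputable def besselI0 (x : ℝ) : ℝ :=
  ∑' k : ℕ, (x / 2) ^ (2 * k) / ((Nat.factorial k : ℝ)) ^ 2

/-- The modified Bessel function of the first kind of order one. -/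
noncomputable def besselI1 (x : ℝ) : ℝ :=
  ∑' k : ℕ, (x / 2) ^ (2 * k + 1) / ((Nat.factorial k : ℝ) * (Nat.factorial (k + 1) : ℝ))

/-!
Write `β = (λ/2c)²` and `g x = ∑ xᵏ/(k!)²`, so that `F(u,t) = g(β(c²t² − u²))`,
`I₀(z) = g((z/2)²)` and `I₁(z) = (z/2) g'((z/2)²)`. Differentiating the entire series `g`
term by term, the chain rule expresses `∂F/∂t` and `∂²F/∂t²` through `g'` and `g''`, and the
Bessel equation `x g'' + g' = g` (the coefficient recursion `(k+1)² aₖ₊₁ = aₖ`) eliminates `g`.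
What remains is an identity of rational functions in `λ, c, t, u` and `√(c²t² − u²)`.
-/

open scoped Nat

noncomputable def powerSeriesSum (a : ℕ → ℝ) (x : ℝ) : ℝ := ∑' k, a k * x ^ k

def derivCoeff (a : ℕ → ℝ) (k : ℕ) : ℝ := (k + 1) * a (k + 1)

section EntireSeries

variable {a : ℕ → ℝ}

lemma summable_mul_pow (ha : ∀ r, Summable fun k => |a k| * r ^ k) (x : ℝ) :
    Summable fun k => a k * x ^ k :=
  (ha |x|).of_norm_bounded fun k => by rw [Real.norm_eq_abs, abs_mul, abs_pow]

lemma succ_mul_abs_pow_le {x R : ℝ} (hx : |x| ≤ R) (hR : 1 ≤ R) (k : ℕ) :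
    ((k : ℝ) + 1) * |x| ^ k ≤ (2 * R) ^ (k + 1) := by
  have h2 : (k : ℝ) + 1 ≤ 2 ^ (k + 1) := by exact_mod_cast Nat.lt_two_pow_self.le
  calc ((k : ℝ) + 1) * |x| ^ k ≤ 2 ^ (k + 1) * R ^ (k + 1) := by
        gcongr
        exact (pow_le_pow_left₀ (abs_nonneg x) hx k).trans (pow_le_pow_right₀ hR k.le_succ)
    _ = (2 * R) ^ (k + 1) := (mul_pow ..).symm

lemma summable_abs_derivCoeff_mul_pow (ha : ∀ r, Summable fun k => |a k| * r ^ k) (r : ℝ) :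
    Summable fun k => |derivCoeff a k| * r ^ k := by
  have hR : 1 ≤ |r| + 1 := le_add_of_nonneg_left (abs_nonneg r)
  refine ((summable_nat_add_iff 1).mpr (ha (2 * (|r| + 1)))).of_norm_bounded fun k => ?_
  calc ‖|derivCoeff a k| * r ^ k‖ = |a (k + 1)| * (((k : ℝ) + 1) * |r| ^ k) := by
        rw [derivCoeff, Real.norm_eq_abs, abs_mul, abs_abs, abs_mul, abs_pow,
          abs_of_nonneg (by positivity : (0 : ℝ) ≤ k + 1)]
        ring
    _ ≤ |a (k + 1)| * (2 * (|r| + 1)) ^ (k + 1) := by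
        gcongr
        exact succ_mul_abs_pow_le (le_add_of_nonneg_right zero_le_one) hR k

lemma powerSeriesSum_eq_add_mul {x : ℝ} (hs : Summable fun k => a k * x ^ k) :
    powerSeriesSum a x = a 0 + x * powerSeriesSum (fun k => a (k + 1)) x := by
  rw [powerSeriesSum, hs.tsum_eq_zero_add, powerSeriesSum, ← tsum_mul_left]
  simp only [pow_zero, mul_one, pow_succ]
  congr 1
  exact tsum_congr fun k => by ring

lemma powerSeriesSum_sub {b : ℕ → ℝ} {x : ℝ} (ha : Summable fun k => a k * x ^ k)
    (hb : Summable fun k => b k * x ^ k) :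
    powerSeriesSum (a - b) x = powerSeriesSum a x - powerSeriesSum b x := by
  simp only [powerSeriesSum, Pi.sub_apply, sub_mul]
  exact ha.tsum_sub hb

lemma hasDerivAt_powerSeriesSum (ha : ∀ r, Summable fun k => |a k| * r ^ k) (x : ℝ) :
    HasDerivAt (powerSeriesSum a) (powerSeriesSum (derivCoeff a) x) x := by
  have hshift : powerSeriesSum a = fun y => a 0 + ∑' k, a (k + 1) * y ^ (k + 1) :=
    funext fun y => by rw [powerSeriesSum, (summable_mul_pow ha y).tsum_eq_zero_add]; simp
  rw [hshift]
  refine .const_add _ (hasDerivAt_tsum_of_isPreconnected (g' := fun k y => derivCoeff a k * y ^ k)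
    (summable_abs_derivCoeff_mul_pow ha (|x| + 1)) Metric.isOpen_ball
    (convex_ball (0 : ℝ) (|x| + 1)).isPreconnected (fun k y _ => ?_) (fun k y hy => ?_)
    (Metric.mem_ball_self (by positivity)) ?_ ?_)
  · refine ((hasDerivAt_pow (k + 1) y).const_mul (a (k + 1))).congr_deriv ?_
    rw [derivCoeff, Nat.add_sub_cancel, Nat.cast_succ]
    ring
  · rw [mem_ball_zero_iff, Real.norm_eq_abs] at hy
    simp only [norm_mul, norm_pow, Real.norm_eq_abs]
    gcongr
  · simp
  · simp

lemma deriv_powerSeriesSum_comp (ha : ∀ r, Summable fun k => |a k| * r ^ k)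
    {g g' : ℝ → ℝ} (hg : ∀ s, HasDerivAt g (g' s) s) :
    deriv (fun s => powerSeriesSum a (g s)) =
      fun s => powerSeriesSum (derivCoeff a) (g s) * g' s :=
  funext fun s => ((hasDerivAt_powerSeriesSum ha (g s)).comp s (hg s)).deriv

lemma iteratedDeriv_two_powerSeriesSum_comp (ha : ∀ r, Summable fun k => |a k| * r ^ k)
    {g g' g'' : ℝ → ℝ} (hg : ∀ s, HasDerivAt g (g' s) s)
    (hg' : ∀ s, HasDerivAt g' (g'' s) s) (s : ℝ) :
    iteratedDeriv 2 (fun s => powerSeriesSum a (g s)) s =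
      powerSeriesSum (derivCoeff (derivCoeff a)) (g s) * g' s ^ 2 +
        powerSeriesSum (derivCoeff a) (g s) * g'' s := by
  rw [iteratedDeriv_succ, iteratedDeriv_one, deriv_powerSeriesSum_comp ha hg]
  refine ((((hasDerivAt_powerSeriesSum (summable_abs_derivCoeff_mul_pow ha) (g s)).comp s
    (hg s)).mul (hg' s)).deriv).trans ?_
  rw [Function.comp_apply]
  ring

end EntireSeries

section Bessel

/-- `powerSeriesSum besselCoeff x = I₀(2√x)` for `x ≥ 0`. -/
noncomputable def besselCoeff (k : ℕ) : ℝ := ((k ! : ℝ) ^ 2)⁻¹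

lemma summable_abs_besselCoeff_mul_pow (r : ℝ) :
    Summable fun k => |besselCoeff k| * r ^ k := by
  refine (Real.summable_pow_div_factorial |r|).of_norm_bounded fun k => ?_
  have hk : (1 : ℝ) ≤ k ! := mod_cast k.factorial_pos
  rw [besselCoeff, norm_mul, norm_pow, Real.norm_eq_abs, Real.norm_eq_abs, abs_abs,
    abs_of_pos (by positivity), div_eq_inv_mul]
  gcongr
  nlinarith

lemma succ_sq_mul_besselCoeff_succ (k : ℕ) :
    ((k : ℝ) + 1) ^ 2 * besselCoeff (k + 1) = besselCoeff k := by
  rw [besselCoeff, besselCoeff, Nat.factorial_succ]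
  push_cast
  field_simp

lemma derivCoeff_besselCoeff (k : ℕ) :
    derivCoeff besselCoeff k = ((k ! : ℝ) * (k + 1)!)⁻¹ := by
  rw [derivCoeff, besselCoeff, Nat.factorial_succ]
  push_cast
  field_simp

lemma powerSeriesSum_besselCoeff_ode (x : ℝ) :
    x * powerSeriesSum (derivCoeff (derivCoeff besselCoeff)) x +
      powerSeriesSum (derivCoeff besselCoeff) x = powerSeriesSum besselCoeff x := by
  have h₀ := summable_abs_besselCoeff_mul_pow
  have hs₀ := summable_mul_pow h₀ x
  have hs₁ := summable_mul_pow (summable_abs_derivCoeff_mul_pow h₀) x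
  have hs : Summable fun k => (besselCoeff - derivCoeff besselCoeff) k * x ^ k := by
    simpa only [Pi.sub_apply, sub_mul] using hs₀.sub hs₁
  have hcoeff : (fun k => (besselCoeff - derivCoeff besselCoeff) (k + 1)) =
      derivCoeff (derivCoeff besselCoeff) := by
    ext k
    have := succ_sq_mul_besselCoeff_succ (k + 1)
    simp only [Pi.sub_apply, derivCoeff]
    push_cast at this ⊢
    linear_combination -this
  rw [← eq_sub_iff_add_eq, ← powerSeriesSum_sub hs₀ hs₁, powerSeriesSum_eq_add_mul hs,
    hcoeff]
  simp [derivCoeff, besselCoeff]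

lemma besselI0_eq_powerSeriesSum (z : ℝ) :
    besselI0 z = powerSeriesSum besselCoeff ((z / 2) ^ 2) :=
  tsum_congr fun k => by rw [besselCoeff, ← pow_mul, inv_mul_eq_div]

lemma besselI1_eq_powerSeriesSum (z : ℝ) :
    besselI1 z = z / 2 * powerSeriesSum (derivCoeff besselCoeff) ((z / 2) ^ 2) := by
  rw [powerSeriesSum, ← tsum_mul_left]
  refine tsum_congr fun k => ?_
  rw [derivCoeff_besselCoeff, ← pow_mul, pow_succ]
  field_simp

lemma hasDerivAt_besselArg (lam c u s : ℝ) :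
    HasDerivAt (fun s => (lam / (2 * c)) ^ 2 * (c ^ 2 * s ^ 2 - u ^ 2))
      (2 * (lam / (2 * c)) ^ 2 * c ^ 2 * s) s :=
  (((hasDerivAt_pow 2 s).const_mul _).sub_const _).const_mul _ |>.congr_deriv (by push_cast; ring)

lemma F_eq_powerSeriesSum (lam c u s : ℝ) :
    F lam c u s = powerSeriesSum besselCoeff ((lam / (2 * c)) ^ 2 * (c ^ 2 * s ^ 2 - u ^ 2)) :=
  tsum_congr fun k => by rw [besselCoeff, mul_pow, ← pow_mul]; field_simp

lemma deriv_F (lam c u s : ℝ) :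
    deriv (fun s => F lam c u s) s =
      powerSeriesSum (derivCoeff besselCoeff) ((lam / (2 * c)) ^ 2 * (c ^ 2 * s ^ 2 - u ^ 2)) *
        (2 * (lam / (2 * c)) ^ 2 * c ^ 2 * s) := by
  rw [funext (F_eq_powerSeriesSum lam c u)]
  exact congrFun (deriv_powerSeriesSum_comp summable_abs_besselCoeff_mul_pow
    (hasDerivAt_besselArg lam c u)) s

lemma iteratedDeriv_two_F (lam c u s : ℝ) :
    iteratedDeriv 2 (fun s => F lam c u s) s =
      powerSeriesSum (derivCoeff (derivCoeff besselCoeff))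
          ((lam / (2 * c)) ^ 2 * (c ^ 2 * s ^ 2 - u ^ 2)) *
          (2 * (lam / (2 * c)) ^ 2 * c ^ 2 * s) ^ 2 +
        powerSeriesSum (derivCoeff besselCoeff) ((lam / (2 * c)) ^ 2 * (c ^ 2 * s ^ 2 - u ^ 2)) *
          (2 * (lam / (2 * c)) ^ 2 * c ^ 2) := by
  rw [funext (F_eq_powerSeriesSum lam c u)]
  exact iteratedDeriv_two_powerSeriesSum_comp summable_abs_besselCoeff_mul_pow
    (hasDerivAt_besselArg lam c u) (fun s => (hasDerivAt_id s).const_mul _ |>.congr_deriv (mul_one _)) s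

end Bessel

theorem planarDensity_bessel_form_general
    (lam c t u : ℝ) (hlam : 0 < lam) (hc : 0 < c)
    (hu0 : 0 < u) (huct : u < c * t) :
    planarDensity lam c u t =
      Real.exp (-(lam * t)) *
        (lam / c * ((c ^ 2 * t ^ 2 + u ^ 2) / (c ^ 2 * t ^ 2 - u ^ 2)) *
            besselI0 (lam / c * Real.sqrt (c ^ 2 * t ^ 2 - u ^ 2)) +
          1 / Real.sqrt (c ^ 2 * t ^ 2 - u ^ 2) *
            ((lam * t * (c ^ 2 * t ^ 2 - u ^ 2) - 2 * (u ^ 2 + c ^ 2 * t ^ 2)) /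
              (c ^ 2 * t ^ 2 - u ^ 2)) *
            besselI1 (lam / c * Real.sqrt (c ^ 2 * t ^ 2 - u ^ 2))) := by
  have hA : 0 < c ^ 2 * t ^ 2 - u ^ 2 := by nlinarith
  have hz : (lam / c * Real.sqrt (c ^ 2 * t ^ 2 - u ^ 2) / 2) ^ 2 =
      (lam / (2 * c)) ^ 2 * (c ^ 2 * t ^ 2 - u ^ 2) := by
    rw [div_pow, mul_pow, Real.sq_sqrt hA.le]
    ring
  rw [planarDensity, F_eq_powerSeriesSum, deriv_F, iteratedDeriv_two_F,
    besselI0_eq_powerSeriesSum, besselI1_eq_powerSeriesSum, hz, ← powerSeriesSum_besselCoeff_ode]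
  generalize powerSeriesSum (derivCoeff (derivCoeff besselCoeff)) _ = g₂
  generalize powerSeriesSum (derivCoeff besselCoeff) _ = g₁
  have hs2 := Real.sq_sqrt hA.le
  have hs := (Real.sqrt_pos.mpr hA).ne'
  generalize Real.sqrt (c ^ 2 * t ^ 2 - u ^ 2) = s at hs hs2 ⊢
  rw [show u ^ 2 = c ^ 2 * t ^ 2 - s ^ 2 by linarith]
  field_simp
  ring

theorem planarDensity_bessel_form
    (lam c t u : ℝ) (hlam : 0 < lam) (hc : 0 < c) (ht : 0 < t)
    (hu0 : 0 < u) (huct : u < c * t) :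
    planarDensity lam c u t =
      Real.exp (-(lam * t)) *
        (lam / c * ((c ^ 2 * t ^ 2 + u ^ 2) / (c ^ 2 * t ^ 2 - u ^ 2)) *
            besselI0 (lam / c * Real.sqrt (c ^ 2 * t ^ 2 - u ^ 2)) +
          1 / Real.sqrt (c ^ 2 * t ^ 2 - u ^ 2) *
            ((lam * t * (c ^ 2 * t ^ 2 - u ^ 2) - 2 * (u ^ 2 + c ^ 2 * t ^ 2)) /
              (c ^ 2 * t ^ 2 - u ^ 2)) *
            besselI1 (lam / c * Real.sqrt (c ^ 2 * t ^ 2 - u ^ 2))) :=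
  planarDensity_bessel_form_general lam c t u hlam hc hu0 huct
end
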